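/- Let p be a prime and G an abelian group in which every element has order a power of p. Let H = {x ∈ G : p•x = 0}. Then the inclusion H ↪ G induces a bijection ℙ(H) → ℙ(G), where ℙ denotes the quotient of nonzero elements by the equivalence relation generated by the common-divisor relation. -/

import Mathlib

/-!
A nonzero `x` of order `p ^ (n + 1)` is equivalent to `p ^ n • x`, which lies in `H`.
If `x = r • g`, then `p ^ n • x` is an element of the cyclic group `⟨g⟩` killed by `p`,
hence a multiple of the corresponding element `p ^ m • g`: a cyclic `p`-group has a unique
subgroup of order `p`. So `x ↦ p ^ n • x` respects the common-divisor relation and inverts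
the map induced by `H ↪ G`.
-/

/-- The common-divisor relation on nonzero elements of an abelian group
(as a `ℤ`-module). -/
def relCD {G : Type*} [AddCommGroup G] (x y : {g : G // g ≠ 0}) : Prop :=
  ∃ (g : G) (r s : ℤ), (x : G) = r • g ∧ (y : G) = s • g

/-- The projective space of an abelian group. -/
def ProjSp (G : Type*) [AddCommGroup G] := Quot (relCD (G := G))

/-- The subgroup of elements killed by `p`. -/
def pTors (p : ℕ) (G : Type*) [AddCommGroup G] : AddSubgroup G where
  carrier := {x | p • x = 0}
  zero_mem' := by simp
  add_mem' := by intro a b ha hb; simp only [Set.mem_setOf_eq, smul_add] at *;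
                 rw [ha, hb, add_zero]
  neg_mem' := by intro a ha; simp only [Set.mem_setOf_eq, smul_neg] at *;
                 rw [ha, neg_zero]

theorem exists_zsmul_eq_zsmul_nsmul_of_addOrderOf_eq_mul {G : Type*} [AddGroup G] {g : G}
    {p n : ℕ} (hp : p ≠ 0) (hg : addOrderOf g = p * n) {r : ℤ} (h : p • r • g = 0) :
    ∃ t : ℤ, r • g = t • n • g := by
  have hdvd : (addOrderOf g : ℤ) ∣ p * r :=
    addOrderOf_dvd_iff_zsmul_eq_zero.2 (by rwa [mul_zsmul, natCast_zsmul])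
  rw [hg, Nat.cast_mul] at hdvd
  obtain ⟨t, rfl⟩ := (Int.mul_dvd_mul_iff_left (by exact_mod_cast hp)).1 hdvd
  exact ⟨t, by rw [mul_comm, mul_zsmul, natCast_zsmul]⟩

section toSocle

variable {G : Type*} [AddGroup G] {p : ℕ} {x : G}

noncomputable def toSocle (p : ℕ) (x : G) : G := (addOrderOf x / p) • x

theorem nsmul_toSocle (hdvd : p ∣ addOrderOf x) : p • toSocle p x = 0 := by
  rw [toSocle, ← mul_nsmul', Nat.mul_div_cancel' hdvd, addOrderOf_nsmul_eq_zero]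

theorem toSocle_ne_zero (hp : 1 < p) (hdvd : p ∣ addOrderOf x) (hx : 0 < addOrderOf x) :
    toSocle p x ≠ 0 :=
  nsmul_ne_zero_of_lt_addOrderOf
    (Nat.div_ne_zero_iff_of_dvd hdvd |>.2 ⟨hx.ne', by omega⟩) (Nat.div_lt_self hx hp)

theorem toSocle_eq_self (hp : p.Prime) (h : p • x = 0) (hx : x ≠ 0) : toSocle p x = x := by
  have := Fact.mk hp
  rw [toSocle, addOrderOf_eq_prime h hx, Nat.div_self hp.pos, one_nsmul]

theorem exists_toSocle_zsmul_eq_zsmul_toSocle {g : G} (hp : p ≠ 0) (hg : p ∣ addOrderOf g)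
    {r : ℤ} (hrg : p ∣ addOrderOf (r • g)) :
    ∃ t : ℤ, toSocle p (r • g) = t • toSocle p g := by
  have hmul : toSocle p (r • g) = ((addOrderOf (r • g) / p : ℕ) * r) • g := by
    rw [toSocle, mul_zsmul, natCast_zsmul]
  rw [hmul]
  exact exists_zsmul_eq_zsmul_nsmul_of_addOrderOf_eq_mul hp (Nat.mul_div_cancel' hg).symm
    (hmul ▸ nsmul_toSocle hrg)

end toSocle

section ProjSp

variable {G G' : Type*} [AddCommGroup G] [AddCommGroup G']

theorem relCD_of_eq_zsmul {x y : {g : G // g ≠ 0}} {r : ℤ} (h : (x : G) = r • (y : G)) :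
    relCD x y :=
  ⟨y, r, 1, h, (one_smul ℤ _).symm⟩

def ProjSp.map (f : G →+ G') (hf : Function.Injective f) : ProjSp G → ProjSp G' :=
  Quot.map (fun x => ⟨f x, (map_ne_zero_iff f hf).2 x.2⟩)
    fun _ _ ⟨g, r, s, hx, hy⟩ => ⟨f g, r, s, (congrArg f hx).trans (map_zsmul f r g),
      (congrArg f hy).trans (map_zsmul f s g)⟩

end ProjSp

section PGroup

variable {G : Type*} [AddCommGroup G] {p : ℕ} (hp : p.Prime)
  (hG : ∀ x : G, ∃ k : ℕ, p ^ k • x = 0)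
include hp hG

theorem dvd_addOrderOf_of_pGroup {x : G} (hx : x ≠ 0) : p ∣ addOrderOf x := by
  obtain ⟨k, hk⟩ := hG x
  obtain ⟨n, -, hn⟩ := (Nat.dvd_prime_pow hp).1 (addOrderOf_dvd_of_nsmul_eq_zero hk)
  rcases n with _ | n
  · exact absurd (AddMonoid.addOrderOf_eq_one_iff.1 hn) hx
  · exact hn ▸ dvd_pow_self p n.succ_ne_zero

theorem addOrderOf_pos_of_pGroup (x : G) : 0 < addOrderOf x := by
  obtain ⟨k, hk⟩ := hG x
  exact addOrderOf_pos_iff.2 (isOfFinAddOrder_iff_nsmul_eq_zero.2 ⟨_, pow_pos hp.pos k, hk⟩)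

noncomputable def socleMap (x : {g : G // g ≠ 0}) : {h : pTors p G // h ≠ 0} :=
  ⟨⟨toSocle p x, nsmul_toSocle (dvd_addOrderOf_of_pGroup hp hG x.2)⟩, fun h =>
    toSocle_ne_zero hp.one_lt (dvd_addOrderOf_of_pGroup hp hG x.2)
      (addOrderOf_pos_of_pGroup hp hG x) (congrArg Subtype.val h)⟩

theorem relCD_socleMap {x y : {g : G // g ≠ 0}} (h : relCD x y) :
    relCD (socleMap hp hG x) (socleMap hp hG y) := by
  obtain ⟨g, r, s, hx, hy⟩ := h
  have hg : g ≠ 0 := by rintro rfl; exact x.2 (by rw [hx, smul_zero])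
  have hmul : ∀ {z : {g : G // g ≠ 0}} {r : ℤ}, (z : G) = r • g →
      ∃ t : ℤ, toSocle p (z : G) = t • toSocle p g := fun {z r} hz =>
    hz ▸ exists_toSocle_zsmul_eq_zsmul_toSocle hp.ne_zero
      (dvd_addOrderOf_of_pGroup hp hG hg) (hz ▸ dvd_addOrderOf_of_pGroup hp hG z.2)
  obtain ⟨t, ht⟩ := hmul hx
  obtain ⟨t', ht'⟩ := hmul hy
  exact ⟨socleMap hp hG ⟨g, hg⟩, t, t', Subtype.ext ht, Subtype.ext ht'⟩

noncomputable def ProjSp.socle : ProjSp G → ProjSp (pTors p G) :=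
  Quot.map (socleMap hp hG) fun _ _ => relCD_socleMap hp hG

theorem ProjSp.leftInverse_socle_map_subtype :
    Function.LeftInverse (socle hp hG) (map (pTors p G).subtype Subtype.val_injective) :=
  Quot.ind fun x => congrArg (Quot.mk _) (Subtype.ext (Subtype.ext
    (toSocle_eq_self hp x.1.2 (fun h => x.2 (Subtype.ext h)))))

theorem ProjSp.rightInverse_socle_map_subtype :
    Function.RightInverse (socle hp hG) (map (pTors p G).subtype Subtype.val_injective) :=
  Quot.ind fun x => Quot.sound (relCD_of_eq_zsmul (natCast_zsmul (x : G) _).symm)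

end PGroup

theorem stmt_7 {G : Type*} [AddCommGroup G] (p : ℕ) (hp : p.Prime)
    (hG : ∀ x : G, ∃ k : ℕ, p ^ k • x = 0) :
    ∃ F : ProjSp (pTors p G) → ProjSp G,
      Function.Bijective F ∧
      ∀ (x : pTors p G) (hx : x ≠ 0),
        F (Quot.mk _ ⟨x, hx⟩) =
          Quot.mk _ ⟨(x : G), by simpa using hx⟩ :=
  ⟨ProjSp.map (pTors p G).subtype Subtype.val_injective,
    ⟨(ProjSp.leftInverse_socle_map_subtype hp hG).injective,
      (ProjSp.rightInverse_socle_map_subtype hp hG).surjective⟩,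
    fun _ _ => rfl⟩
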